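/- Let c(r,ω) > 0 be smooth on {R₁ ≤ |x| ≤ R₂} ⊂ ℝⁿ∖{0} with x = rω, |ω| = 1. The Euclidean sphere {|x| = r₀} is strictly convex at x₀ = r₀ω₀ with respect to c^{-2}dx², viewed from the exterior, if and only if the Herglotz–Wieckert–Zoeppritz condition ∂/∂r (r/c(r,ω)) > 0 holds at (r₀,ω₀). -/

import Mathlib

open scoped RealInnerProductSpace

/-- Christoffel symbols of the conformally Euclidean metric `c⁻² dx²` on
`EuclideanSpace ℝ (Fin n)`:
`Γᵢⱼᵏ = (1/2) c² (δⱼᵏ ∂ᵢ(c⁻²) + δᵢᵏ ∂ⱼ(c⁻²) − δᵢⱼ ∂ₖ(c⁻²))`. -/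
noncomputable def gammaConf {n : ℕ} (c : EuclideanSpace ℝ (Fin n) → ℝ)
    (x : EuclideanSpace ℝ (Fin n)) (i j k : Fin n) : ℝ :=
  (1 / 2) * (c x) ^ 2 *
    ((if j = k then (1 : ℝ) else 0) * fderiv ℝ (fun y => ((c y) ^ 2)⁻¹) x (EuclideanSpace.single i 1)
      + (if i = k then (1 : ℝ) else 0) * fderiv ℝ (fun y => ((c y) ^ 2)⁻¹) x (EuclideanSpace.single j 1)
      - (if i = j then (1 : ℝ) else 0) * fderiv ℝ (fun y => ((c y) ^ 2)⁻¹) x (EuclideanSpace.single k 1))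

/-- The second fundamental form (up to the positive normalization `1/|∇f|_{g̃}`) of the level
set of `f` through `x`, with respect to the metric `c⁻² dx²` and with normal pointing in the
direction of `∇f`, evaluated on a tangent vector `ξ`:
`II(ξ,ξ) = Σᵢⱼ (∂ᵢ∂ⱼ f − Σₖ Γᵢⱼᵏ ∂ₖ f) ξ i ξ j`, i.e. the covariant Hessian of `f`. -/
noncomputable def sffConf {n : ℕ} (c f : EuclideanSpace ℝ (Fin n) → ℝ)
    (x ξ : EuclideanSpace ℝ (Fin n)) : ℝ :=
  ∑ i, ∑ j,
    (fderiv ℝ (fun y => fderiv ℝ f y (EuclideanSpace.single j 1)) x (EuclideanSpace.single i 1)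
      - ∑ k, gammaConf c x i j k * fderiv ℝ f x (EuclideanSpace.single k 1)) * ξ i * ξ j

/-- Expand a continuous linear functional on Euclidean space along the standard basis. -/
lemma sumL_aux {n : ℕ} (L : EuclideanSpace ℝ (Fin n) →L[ℝ] ℝ) (x : EuclideanSpace ℝ (Fin n)) :
    ∑ k, L (EuclideanSpace.single k 1) * x k = L x := by
  have hx : ∑ k, x k • EuclideanSpace.single k (1:ℝ) = x := by
    have := (EuclideanSpace.basisFun (Fin n) ℝ).sum_repr x
    simpa [EuclideanSpace.basisFun_apply, EuclideanSpace.basisFun_repr] using this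
  conv_rhs => rw [← hx]
  simp [Finset.mul_sum, mul_comm]

/-- First derivative of the squared norm. -/
lemma fderiv_normsq_aux {n : ℕ} (y v : EuclideanSpace ℝ (Fin n)) :
    fderiv ℝ (fun z : EuclideanSpace ℝ (Fin n) => ‖z‖ ^ 2) y v = 2 * ⟪y, v⟫ := by
  rw [(hasStrictFDerivAt_norm_sq y).hasFDerivAt.fderiv]
  simp [real_inner_comm]

/-- Second derivative of the squared norm. -/
lemma fderiv2_normsq_aux {n : ℕ} (x : EuclideanSpace ℝ (Fin n)) (i j : Fin n) :
    fderiv ℝ (fun y => fderiv ℝ (fun z : EuclideanSpace ℝ (Fin n) => ‖z‖ ^ 2) y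
      (EuclideanSpace.single j 1)) x (EuclideanSpace.single i 1)
      = if i = j then 2 else 0 := by
  have hfun : (fun y : EuclideanSpace ℝ (Fin n) =>
      fderiv ℝ (fun z : EuclideanSpace ℝ (Fin n) => ‖z‖ ^ 2) y (EuclideanSpace.single j 1))
      = fun y => ((2:ℝ) • innerSL ℝ (EuclideanSpace.single j (1:ℝ))) y := by
    funext y
    rw [(hasStrictFDerivAt_norm_sq y).hasFDerivAt.fderiv]
    simp [real_inner_comm]
  rw [hfun, ContinuousLinearMap.fderiv]
  simp [EuclideanSpace.inner_single_left, EuclideanSpace.single_apply, eq_comm]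

/-- Derivative of `c⁻²`. -/
lemma fderiv_inv_sq_aux {n : ℕ} (c : EuclideanSpace ℝ (Fin n) → ℝ)
    (x₀ : EuclideanSpace ℝ (Fin n)) (L : EuclideanSpace ℝ (Fin n) →L[ℝ] ℝ)
    (hL : HasFDerivAt c L x₀) (hc0 : 0 < c x₀) :
    fderiv ℝ (fun y => ((c y) ^ 2)⁻¹) x₀ = (-2 * ((c x₀) ^ 3)⁻¹) • L := by
  have hg : HasDerivAt (fun t : ℝ => (t ^ 2)⁻¹) (-(2 * c x₀ ^ 1) / ((c x₀ ^ 2) ^ 2)) (c x₀) :=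
    (hasDerivAt_pow 2 (c x₀)).inv (pow_ne_zero 2 hc0.ne')
  have h2 : HasFDerivAt (fun y => ((c y) ^ 2)⁻¹)
      ((-(2 * c x₀ ^ 1) / ((c x₀ ^ 2) ^ 2)) • L) x₀ := hg.comp_hasFDerivAt x₀ hL
  have he : -(2 * c x₀ ^ 1) / ((c x₀ ^ 2) ^ 2) = -2 * ((c x₀) ^ 3)⁻¹ := by
    field_simp
  rw [← he]; exact h2.fderiv

lemma double_sum_aux {n : ℕ} (A : ℝ) (q x ξ : Fin n → ℝ) (h0 : ∑ j, x j * ξ j = 0) :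
    ∑ i, ∑ j, ((if i = j then A else 0) - q i * x j - q j * x i) * ξ i * ξ j
      = A * ∑ i, ξ i ^ 2 := by
  have h : ∀ i j, ((if i = j then A else 0) - q i * x j - q j * x i) * ξ i * ξ j
      = (if i = j then A * (ξ i * ξ j) else 0) - (q i * ξ i) * (x j * ξ j)
        - (q j * ξ j) * (x i * ξ i) := by
    intro i j; split_ifs <;> ring
  simp only [h, Finset.sum_sub_distrib, Finset.sum_ite_eq, Finset.mem_univ, if_true,
    ← Finset.sum_mul, ← Finset.mul_sum, h0]
  ring_nf

/-- Evaluation of the second fundamental form of the sphere on tangent vectors. -/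
lemma sffConf_eval {n : ℕ} (c : EuclideanSpace ℝ (Fin n) → ℝ)
    (x₀ ξ : EuclideanSpace ℝ (Fin n)) (L : EuclideanSpace ℝ (Fin n) →L[ℝ] ℝ)
    (hL : HasFDerivAt c L x₀) (hc0 : 0 < c x₀) (hξ : ⟪x₀, ξ⟫ = 0) :
    sffConf c (fun y => ‖y‖ ^ 2) x₀ ξ
      = (2 - 2 * (L x₀ / c x₀)) * ∑ i, ξ i ^ 2 := by
  have hinv := fderiv_inv_sq_aux c x₀ L hL hc0
  set u : ℝ := (c x₀) ^ 2 with hu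
  set κ : ℝ := -2 * ((c x₀) ^ 3)⁻¹ with hκ
  -- the Christoffel contraction
  have hG : ∀ i j : Fin n,
      ∑ k, gammaConf c x₀ i j k * fderiv ℝ (fun y : EuclideanSpace ℝ (Fin n) => ‖y‖ ^ 2) x₀
        (EuclideanSpace.single k 1)
      = u * κ * L (EuclideanSpace.single i 1) * x₀ j
        + u * κ * L (EuclideanSpace.single j 1) * x₀ i
        - (if i = j then u * κ * L x₀ else 0) := by
    intro i j
    have hf1 : ∀ k : Fin n,
        fderiv ℝ (fun y : EuclideanSpace ℝ (Fin n) => ‖y‖ ^ 2) x₀ (EuclideanSpace.single k 1)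
          = 2 * x₀ k := by
      intro k
      rw [fderiv_normsq_aux]
      simp [EuclideanSpace.inner_single_right]
    have h : ∀ k : Fin n, gammaConf c x₀ i j k * fderiv ℝ
        (fun y : EuclideanSpace ℝ (Fin n) => ‖y‖ ^ 2) x₀ (EuclideanSpace.single k 1)
        = (if j = k then u * κ * L (EuclideanSpace.single i 1) * x₀ k else 0)
          + (if i = k then u * κ * L (EuclideanSpace.single j 1) * x₀ k else 0)
          - (if i = j then u * κ * (L (EuclideanSpace.single k 1) * x₀ k) else 0) := by
      intro k
      rw [hf1, gammaConf, hinv]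
      simp only [ContinuousLinearMap.coe_smul', Pi.smul_apply, smul_eq_mul, ← hκ, ← hu]
      split_ifs <;> ring
    rw [Finset.sum_congr rfl fun k _ => h k, Finset.sum_sub_distrib, Finset.sum_add_distrib,
      Finset.sum_ite_eq, Finset.sum_ite_eq]
    by_cases hij : i = j <;> simp [hij, ← Finset.mul_sum, sumL_aux, mul_assoc]
  have h0 : ∑ j, x₀ j * ξ j = 0 := by
    rw [← hξ]; simp [PiLp.inner_apply, RCLike.inner_apply]
    exact Finset.sum_congr rfl fun _ _ => mul_comm _ _
  have hentry : ∀ i j : Fin n,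
      (fderiv ℝ (fun y => fderiv ℝ (fun z : EuclideanSpace ℝ (Fin n) => ‖z‖ ^ 2) y
          (EuclideanSpace.single j 1)) x₀ (EuclideanSpace.single i 1)
        - ∑ k, gammaConf c x₀ i j k * fderiv ℝ (fun y : EuclideanSpace ℝ (Fin n) => ‖y‖ ^ 2) x₀
            (EuclideanSpace.single k 1))
      = (if i = j then 2 + u * κ * L x₀ else 0)
        - (u * κ * L (EuclideanSpace.single i 1)) * x₀ j
        - (u * κ * L (EuclideanSpace.single j 1)) * x₀ i := by
    intro i j
    rw [hG, fderiv2_normsq_aux]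
    split_ifs <;> ring
  rw [sffConf]
  simp only [hentry]
  have hd := double_sum_aux (2 + u * κ * L x₀)
    (fun i => u * κ * L (EuclideanSpace.single i 1)) (fun j => x₀ j) (fun i => ξ i) h0
  simp only at hd
  rw [hd]
  have huκ : u * κ = -2 / c x₀ := by
    rw [hu, hκ]; field_simp
  rw [huκ]
  congr 1
  field_simp
  ring

/-- For a smooth positive speed `c` on the annulus `{R₁ ≤ |x| ≤ R₂}`,
the Euclidean sphere `{|x| = r₀}` is strictly convex at `x₀ = r₀ω₀` w.r.t. `c⁻²dx²`, viewed
from the exterior, if and only if the Herglotz–Wieckert–Zoeppritz condition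
`∂/∂r (r / c(rω)) > 0` holds at `(r₀, ω₀)`. -/
theorem sphere_strictly_convex_iff_herglotz
    {n : ℕ} (hn : 2 ≤ n) (R₁ R₂ r₀ : ℝ) (hR₁ : 0 < R₁) (h₁ : R₁ ≤ r₀) (h₂ : r₀ ≤ R₂)
    (c : EuclideanSpace ℝ (Fin n) → ℝ)
    (hc : ∀ x : EuclideanSpace ℝ (Fin n), R₁ ≤ ‖x‖ → ‖x‖ ≤ R₂ → ContDiffAt ℝ (⊤ : ℕ∞) c x)
    (hcpos : ∀ x : EuclideanSpace ℝ (Fin n), R₁ ≤ ‖x‖ → ‖x‖ ≤ R₂ → 0 < c x)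
    (ω₀ x₀ : EuclideanSpace ℝ (Fin n)) (hω₀ : ‖ω₀‖ = 1) (hx₀ : x₀ = r₀ • ω₀) :
    (∀ ξ : EuclideanSpace ℝ (Fin n), ξ ≠ 0 → ⟪x₀, ξ⟫ = 0 →
        0 < sffConf c (fun y => ‖y‖ ^ 2) x₀ ξ)
      ↔ 0 < deriv (fun r : ℝ => r / c (r • ω₀)) r₀ := by
  have hr0 : 0 < r₀ := lt_of_lt_of_le hR₁ h₁
  have hnx : ‖x₀‖ = r₀ := by
    rw [hx₀, norm_smul, hω₀, mul_one, Real.norm_eq_abs, abs_of_pos hr0]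
  have hcx : ContDiffAt ℝ (⊤ : ℕ∞) c x₀ := hc x₀ (hnx ▸ h₁) (hnx ▸ h₂)
  have hc0 : 0 < c x₀ := hcpos x₀ (hnx ▸ h₁) (hnx ▸ h₂)
  have hdiff : DifferentiableAt ℝ c x₀ := hcx.differentiableAt (by simp)
  set L : EuclideanSpace ℝ (Fin n) →L[ℝ] ℝ := fderiv ℝ c x₀ with hLdef
  have hL : HasFDerivAt c L x₀ := hdiff.hasFDerivAt
  -- the radial derivative of c
  have hg : HasDerivAt (fun r : ℝ => c (r • ω₀)) (L ω₀) r₀ := by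
    have hsm : HasDerivAt (fun r : ℝ => r • ω₀) ω₀ r₀ := by
      simpa using (hasDerivAt_id r₀).smul_const ω₀
    have hL' : HasFDerivAt c L (r₀ • ω₀) := hx₀ ▸ hL
    exact hL'.comp_hasDerivAt r₀ hsm
  have hcne : c (r₀ • ω₀) ≠ 0 := by rw [← hx₀]; exact hc0.ne'
  have hder : deriv (fun r : ℝ => r / c (r • ω₀)) r₀
      = (c x₀ - r₀ * L ω₀) / (c x₀) ^ 2 := by
    have h := (hasDerivAt_id r₀).div hg hcne
    simp only [id_eq] at h
    rw [show (fun r : ℝ => r / c (r • ω₀)) = (id / fun r => c (r • ω₀)) from rfl, h.deriv, ← hx₀]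
    ring
  have hLx : L x₀ = r₀ * L ω₀ := by
    rw [hx₀, map_smul]; simp
  -- equivalence of the two positivity conditions
  have hrhs : (0 < deriv (fun r : ℝ => r / c (r • ω₀)) r₀) ↔ r₀ * L ω₀ < c x₀ := by
    rw [hder]
    constructor
    · intro h
      rcases div_pos_iff.mp h with ⟨h1, _⟩ | ⟨_, h2⟩
      · linarith
      · exact absurd h2 (not_lt.mpr (sq_nonneg _))
    · intro h
      apply div_pos (by linarith) (by positivity)
  constructor
  · intro H
    -- find a nonzero tangent vector
    have hx0ne : x₀ ≠ 0 := by
      intro h; rw [h, norm_zero] at hnx; exact hr0.ne hnx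
    have hKne : (ℝ ∙ x₀)ᗮ ≠ ⊥ := by
      intro hbot
      have htop : (ℝ ∙ x₀) = ⊤ := Submodule.orthogonal_eq_bot_iff.mp hbot
      have h1 : Module.finrank ℝ (ℝ ∙ x₀) = 1 := finrank_span_singleton hx0ne
      have h2 : Module.finrank ℝ (EuclideanSpace ℝ (Fin n)) = n := finrank_euclideanSpace_fin
      rw [htop, finrank_top] at h1
      omega
    obtain ⟨ξ, hξmem, hξne⟩ := Submodule.exists_mem_ne_zero_of_ne_bot hKne
    have hξtan : ⟪x₀, ξ⟫ = 0 :=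
      hξmem x₀ (Submodule.mem_span_singleton_self x₀)
    have hpos := H ξ hξne hξtan
    rw [sffConf_eval c x₀ ξ L hL hc0 hξtan] at hpos
    have hs : 0 < ∑ i, ξ i ^ 2 := by
      have : ∃ i, ξ i ≠ 0 := by
        by_contra hco
        push_neg at hco
        apply hξne
        ext i
        simpa using hco i
      obtain ⟨i, hi⟩ := this
      exact Finset.sum_pos' (fun i _ => sq_nonneg _)
        ⟨i, Finset.mem_univ i, by positivity⟩
    obtain ⟨t, ht⟩ : ∃ t, L x₀ / c x₀ = t := ⟨_, rfl⟩
    rw [ht] at hpos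
    have hA : 0 < 2 - 2 * t := by nlinarith
    have htlt : L x₀ / c x₀ < 1 := by rw [ht]; linarith
    have := (div_lt_one hc0).mp htlt
    rw [hrhs]
    linarith [hLx ▸ this]
  · intro H ξ hξne hξtan
    rw [sffConf_eval c x₀ ξ L hL hc0 hξtan]
    have hs : 0 < ∑ i, ξ i ^ 2 := by
      have : ∃ i, ξ i ≠ 0 := by
        by_contra hco
        push_neg at hco
        apply hξne
        ext i
        simpa using hco i
      obtain ⟨i, hi⟩ := this
      exact Finset.sum_pos' (fun i _ => sq_nonneg _)
        ⟨i, Finset.mem_univ i, by positivity⟩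
    have hlt : r₀ * L ω₀ < c x₀ := hrhs.mp H
    have hA : 0 < 2 - 2 * (L x₀ / c x₀) := by
      have hd1 : L x₀ / c x₀ < 1 := by
        rw [hLx]
        exact (div_lt_one hc0).mpr hlt
      obtain ⟨t, ht⟩ : ∃ t, L x₀ / c x₀ = t := ⟨_, rfl⟩
      rw [ht] at hd1 ⊢
      linarith
    exact mul_pos hA hs
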